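/- Let f = P/Q be a rational function over ℂ with deg Q ≥ deg P + 2. Then the sum over all poles p of f of the residue of f at p equals zero. -/

import Mathlib

/-! Over `ℂ` the denominator splits, so partial fractions write `P / Q` as
`∑ₚ rₚ(z) / (z - p) ^ mₚ` with `deg rₚ < mₚ`; there is no polynomial part as `deg P < deg Q`.
On a small circle around `p` only the `p`-th term contributes, and its integral is `2πi` times
the Taylor coefficient of `rₚ` at `p` of order `mₚ - 1`, which is the top coefficient of `rₚ`.
Clearing denominators, `P / lc Q = ∑ₚ rₚ ∏_{q ≠ p} (X - q) ^ m_q`; comparing coefficients of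
`X ^ (deg Q - 1)`, which vanish on the left as `deg P ≤ deg Q - 2`, the top coefficients of the
`rₚ` sum to zero. -/

open Complex Filter Topology

open Polynomial Metric Set

namespace Polynomial

theorem coeff_taylor_of_natDegree_le {R : Type*} [CommSemiring R] {f : R[X]} {k : ℕ} (r : R)
    (h : f.natDegree ≤ k) : (taylor r f).coeff k = f.coeff k := by
  rcases h.lt_or_eq with h | rfl
  · rw [coeff_eq_zero_of_natDegree_lt h,
      coeff_eq_zero_of_natDegree_lt (by rwa [natDegree_taylor])]
  · rw [coeff_taylor_natDegree, coeff_natDegree]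

section PartialFractions

variable {ι : Type*} [DecidableEq ι] {s : Finset ι}

section CommRing

variable {R : Type*} [CommRing R] [Nontrivial R] {g r : ι → R[X]}

theorem degree_sum_mul_prod_erase_lt (hg : ∀ i ∈ s, (g i).Monic)
    (hr : ∀ i ∈ s, (r i).degree < (g i).degree) :
    (∑ i ∈ s, r i * ∏ k ∈ s.erase i, g k).degree < (∏ i ∈ s, g i).degree := by
  refine (degree_sum_le _ _).trans_lt ((Finset.sup_lt_iff ?_).2 fun i hi => ?_)
  · exact bot_lt_iff_ne_bot.2 (degree_ne_bot.2 (monic_prod_of_monic s g hg).ne_zero)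
  · have hG : (∏ k ∈ s.erase i, g k).Monic :=
      monic_prod_of_monic _ g fun k hk => hg k (Finset.mem_of_mem_erase hk)
    rw [← Finset.mul_prod_erase s g hi, hG.degree_mul, hG.degree_mul]
    exact WithBot.add_lt_add_right (degree_ne_bot.2 hG.ne_zero) (hr i hi)

theorem exists_eq_sum_mul_prod_erase (f : R[X]) (hg : ∀ i ∈ s, (g i).Monic)
    (hgg : Set.Pairwise s fun i j => IsCoprime (g i) (g j))
    (hf : f.degree < (∏ i ∈ s, g i).degree) :
    ∃ r : ι → R[X], (∀ i ∈ s, (r i).degree < (g i).degree) ∧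
      f = ∑ i ∈ s, r i * ∏ k ∈ s.erase i, g k := by
  obtain ⟨q, r, hr, rfl⟩ := eq_quo_mul_prod_add_sum_rem_mul_prod f hg hgg
  have hG := monic_prod_of_monic s g hg
  have hq : q = 0 := by
    rw [← (div_modByMonic_unique q _ hG ⟨by rw [add_comm, mul_comm],
      degree_sum_mul_prod_erase_lt hg hr⟩).1, divByMonic_eq_zero_iff hG]
    exact hf
  exact ⟨r, hr, by rw [hq, zero_mul, zero_add]⟩

theorem sum_coeff_eq_zero_of_eq_sum_mul_prod_erase {f : R[X]} (hg : ∀ i ∈ s, (g i).Monic)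
    (hr : ∀ i ∈ s, (r i).degree < (g i).degree)
    (hf : f = ∑ i ∈ s, r i * ∏ k ∈ s.erase i, g k)
    (hdeg : f.degree + 2 ≤ (∏ i ∈ s, g i).degree) :
    ∑ i ∈ s, (r i).coeff ((g i).natDegree - 1) = 0 := by
  set D := ∑ i ∈ s, (g i).natDegree
  have hfD : f.coeff (D - 1) = 0 := by
    rcases eq_or_ne f 0 with rfl | hf0
    · exact coeff_zero _
    rw [degree_eq_natDegree hf0, degree_eq_natDegree (monic_prod_of_monic s g hg).ne_zero,
      natDegree_prod_of_monic s g hg] at hdeg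
    exact coeff_eq_zero_of_natDegree_lt (by norm_cast at hdeg; omega)
  rw [← hfD, hf, finsetSum_coeff]
  refine Finset.sum_congr rfl fun i hi => ?_
  rcases eq_or_ne (r i) 0 with h0 | h0
  · rw [h0, zero_mul, coeff_zero, coeff_zero]
  have hG : (∏ k ∈ s.erase i, g k).Monic :=
    monic_prod_of_monic _ g fun k hk => hg k (Finset.mem_of_mem_erase hk)
  have hGdeg : (∏ k ∈ s.erase i, g k).natDegree + (g i).natDegree = D := by
    rw [natDegree_prod_of_monic _ g fun k hk => hg k (Finset.mem_of_mem_erase hk),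
      Finset.sum_erase_add _ _ hi]
  have hri : (r i).natDegree < (g i).natDegree := by
    have := hr i hi
    rwa [degree_eq_natDegree h0, degree_eq_natDegree (hg i hi).ne_zero, Nat.cast_lt] at this
  rw [show D - 1 = ((g i).natDegree - 1) + (∏ k ∈ s.erase i, g k).natDegree by omega,
    coeff_mul_add_eq_of_natDegree_le (by omega) le_rfl, hG.coeff_natDegree, mul_one]

end CommRing

theorem eval_div_eval_prod_eq_sum {K : Type*} [Field K] {g r : ι → K[X]} {f : K[X]}
    (hf : f = ∑ i ∈ s, r i * ∏ k ∈ s.erase i, g k)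
    {z : K} (hz : ∀ i ∈ s, (g i).eval z ≠ 0) :
    f.eval z / (∏ i ∈ s, g i).eval z = ∑ i ∈ s, (r i).eval z / (g i).eval z := by
  simp only [hf, eval_finsetSum, eval_mul, eval_prod, Finset.sum_div]
  refine Finset.sum_congr rfl fun i hi => ?_
  rw [← Finset.mul_prod_erase s _ hi, mul_div_mul_right _ _
    (Finset.prod_ne_zero_iff.2 fun k hk => hz k (Finset.mem_of_mem_erase hk))]

end PartialFractions

section Splits

variable {K : Type*} [Field K] [DecidableEq K] {P Q : K[X]} {r : K → K[X]}

theorem Splits.eq_C_leadingCoeff_mul_prod_X_sub_C_pow (hQ : Q.Splits) :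
    Q = C Q.leadingCoeff * ∏ p ∈ Q.roots.toFinset, (X - C p) ^ Q.rootMultiplicity p := by
  rw [← prod_multiset_root_eq_finset_root]
  exact hQ.eq_prod_roots

theorem Splits.degree_prod_X_sub_C_pow (hQ : Q.Splits) (hQ0 : Q ≠ 0) :
    (∏ p ∈ Q.roots.toFinset, (X - C p) ^ Q.rootMultiplicity p).degree = Q.degree := by
  conv_rhs => rw [hQ.eq_C_leadingCoeff_mul_prod_X_sub_C_pow]
  exact (degree_C_mul (leadingCoeff_ne_zero.2 hQ0)).symm

theorem Splits.exists_eq_sum_mul_prod_X_sub_C_pow (hQ : Q.Splits) (hPQ : P.degree < Q.degree) :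
    ∃ r : K → K[X], (∀ p ∈ Q.roots.toFinset, (r p).degree < Q.rootMultiplicity p) ∧
      C Q.leadingCoeff⁻¹ * P = ∑ p ∈ Q.roots.toFinset,
        r p * ∏ q ∈ Q.roots.toFinset.erase p, (X - C q) ^ Q.rootMultiplicity q := by
  have hQ0 : Q ≠ 0 := ne_zero_of_degree_gt hPQ
  have hdeg : (C Q.leadingCoeff⁻¹ * P).degree <
      (∏ p ∈ Q.roots.toFinset, (X - C p) ^ Q.rootMultiplicity p).degree := by
    rwa [degree_C_mul (inv_ne_zero (leadingCoeff_ne_zero.2 hQ0)), hQ.degree_prod_X_sub_C_pow hQ0]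
  obtain ⟨r, hr, hP⟩ := exists_eq_sum_mul_prod_erase _ (fun p _ => (monic_X_sub_C p).pow _)
    (fun p _ q _ hpq => (isCoprime_X_sub_C_of_isUnit_sub (sub_ne_zero.2 hpq).isUnit).pow) hdeg
  exact ⟨r, fun p hp => by simpa using hr p hp, hP⟩

theorem Splits.eval_div_eval_eq_sum (hQ : Q.Splits)
    (hP : C Q.leadingCoeff⁻¹ * P = ∑ p ∈ Q.roots.toFinset,
      r p * ∏ q ∈ Q.roots.toFinset.erase p, (X - C q) ^ Q.rootMultiplicity q)
    {z : K} (hz : z ∉ Q.roots.toFinset) :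
    P.eval z / Q.eval z =
      ∑ p ∈ Q.roots.toFinset, (r p).eval z / (z - p) ^ Q.rootMultiplicity p := by
  have hQz : Q.eval z = Q.leadingCoeff *
      (∏ p ∈ Q.roots.toFinset, (X - C p) ^ Q.rootMultiplicity p).eval z := by
    conv_lhs => rw [hQ.eq_C_leadingCoeff_mul_prod_X_sub_C_pow, eval_C_mul]
  rw [hQz, ← div_div, div_eq_inv_mul (P.eval z), ← eval_C_mul, eval_div_eval_prod_eq_sum hP]
  · simp only [eval_pow, eval_sub, eval_X, eval_C]
  · intro p hp
    simp only [eval_pow, eval_sub, eval_X, eval_C]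
    exact pow_ne_zero _ (sub_ne_zero.2 (ne_of_mem_of_not_mem hp hz).symm)

theorem Splits.sum_coeff_rootMultiplicity_sub_one_eq_zero (hQ : Q.Splits) (hQ0 : Q ≠ 0)
    (hr : ∀ p ∈ Q.roots.toFinset, (r p).degree < Q.rootMultiplicity p)
    (hP : C Q.leadingCoeff⁻¹ * P = ∑ p ∈ Q.roots.toFinset,
      r p * ∏ q ∈ Q.roots.toFinset.erase p, (X - C q) ^ Q.rootMultiplicity q)
    (hdeg : P.degree + 2 ≤ Q.degree) :
    ∑ p ∈ Q.roots.toFinset, (r p).coeff (Q.rootMultiplicity p - 1) = 0 := by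
  have h := sum_coeff_eq_zero_of_eq_sum_mul_prod_erase (fun p _ => (monic_X_sub_C p).pow _)
    (fun p hp => by simpa using hr p hp) hP (by
      rwa [degree_C_mul (inv_ne_zero (leadingCoeff_ne_zero.2 hQ0)),
        hQ.degree_prod_X_sub_C_pow hQ0])
  simpa using h

end Splits

end Polynomial

theorem circleIntegral_eval_div_sub_pow_succ (f : ℂ[X]) (c : ℂ) (n : ℕ) {R : ℝ}
    (hR : 0 < R) :
    (∮ z in C(c, R), f.eval z / (z - c) ^ (n + 1)) = 2 * Real.pi * I * (taylor c f).coeff n := by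
  set N := f.natDegree + n + 1
  have hc : c ∉ sphere c |R| := by rw [abs_of_pos hR]; simpa using hR.ne
  have hexp : EqOn (fun z => f.eval z / (z - c) ^ (n + 1))
      (fun z => ∑ k ∈ Finset.range N, (taylor c f).coeff k * (z - c) ^ ((k : ℤ) - (n + 1)))
      (sphere c R) := by
    intro z hz
    have hzc : z - c ≠ 0 := sub_ne_zero.2 (ne_of_mem_sphere hz hR.ne')
    have hf : f.eval z = (taylor c f).eval (z - c) := by rw [taylor_eval, sub_add_cancel]
    dsimp only
    rw [hf, eval_eq_sum_range' (n := N) (by rw [natDegree_taylor]; omega), Finset.sum_div]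
    refine Finset.sum_congr rfl fun k _ => ?_
    rw [zpow_sub₀ hzc, zpow_natCast, mul_div_assoc]
    norm_cast
  rw [circleIntegral.integral_congr hR.le hexp, circleIntegral.integral_fun_sum,
    Finset.sum_eq_single_of_mem n (Finset.mem_range.2 (by omega))]
  · simp only [circleIntegral.integral_const_mul, sub_add_cancel_left, zpow_neg_one]
    rw [circleIntegral.integral_sub_inv_of_mem_ball (mem_ball_self hR), mul_comm]
  · intro k _ hk
    rw [circleIntegral.integral_const_mul, circleIntegral.integral_sub_zpow_of_ne (by omega),
      mul_zero]
  · intro k _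
    exact (circleIntegrable_sub_zpow_iff.2 (Or.inr (Or.inr hc))).const_smul
      (a := (taylor c f).coeff k)

theorem circleIntegral_eval_div_sub_pow_of_notMem_closedBall (f : ℂ[X]) (n : ℕ) {c w : ℂ}
    {R : ℝ} (hR : 0 ≤ R) (hw : w ∉ closedBall c R) :
    (∮ z in C(c, R), f.eval z / (z - w) ^ n) = 0 := by
  have hd : DifferentiableOn ℂ (fun z => f.eval z / (z - w) ^ n) {w}ᶜ := fun z hz =>
    (f.differentiableAt.div ((differentiableAt_id.sub_const w).pow n)
      (pow_ne_zero _ (sub_ne_zero.2 hz))).differentiableWithinAt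
  exact (hd.diffContOnCl_ball (subset_compl_singleton_iff.2 hw)).circleIntegral_eq_zero hR

theorem eventually_circleIntegral_eq_of_eq_sum_eval_div_sub_pow {F : ℂ → ℂ} {s : Finset ℂ}
    {f : ℂ → ℂ[X]} {n : ℂ → ℕ}
    (hF : ∀ z ∉ s, F z = ∑ j ∈ s, (f j).eval z / (z - j) ^ n j)
    {p : ℂ} (hp : p ∈ s) (hfp : (f p).degree < n p) (hn : n p ≠ 0) :
    ∀ᶠ ε in 𝓝[>] 0, (∮ z in C(p, ε), F z) = 2 * Real.pi * I * (f p).coeff (n p - 1) := by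
  have hsep : ∀ᶠ ε in 𝓝[>] (0 : ℝ), ∀ j ∈ s, j ≠ p → ε < dist j p := by
    refine (eventually_all_finset s).2 fun j _ => ?_
    by_cases hj : j = p
    · exact Eventually.of_forall fun _ h => absurd hj h
    · exact nhdsWithin_le_nhds ((eventually_lt_nhds (dist_pos.2 hj)).mono fun _ h _ => h)
  filter_upwards [self_mem_nhdsWithin, hsep] with ε (hε : 0 < ε) hsep
  have hs : ∀ z ∈ sphere p ε, ∀ j ∈ s, z ≠ j := by
    rintro z hz j hj rfl
    by_cases hjp : z = p
    · exact ne_of_mem_sphere hz hε.ne' hjp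
    · exact (hsep z hj hjp).ne (mem_sphere.1 hz).symm
  obtain ⟨k, hk⟩ := Nat.exists_eq_succ_of_ne_zero hn
  rw [circleIntegral.integral_congr hε.le fun z hz => hF z fun hzs => hs z hz z hzs rfl,
    circleIntegral.integral_fun_sum, Finset.sum_eq_single_of_mem p hp, hk,
    circleIntegral_eval_div_sub_pow_succ _ _ _ hε, Nat.succ_sub_one,
    coeff_taylor_of_natDegree_le _
      (natDegree_le_iff_degree_le.2 (Order.le_of_lt_succ (by rwa [hk] at hfp)))]
  · exact fun j hj hjp => circleIntegral_eval_div_sub_pow_of_notMem_closedBall _ _ hε.le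
      fun h => (hsep j hj hjp).not_ge (mem_closedBall.1 h)
  · exact fun j _ => ContinuousOn.circleIntegrable hε.le <| (f j).continuous.continuousOn.div
      (by fun_prop) fun z hz => pow_ne_zero _ (sub_ne_zero.2 (hs z hz j ‹_›))

/-- Global residue theorem for a rational function `f = P/Q` with `deg Q ≥ deg P + 2`:
the residues of `f` at the roots of `Q` (defined via small circle integrals,
`Res_{z=p} f = (2πi)⁻¹ ∮_{|z−p|=ε} f` for all sufficiently small `ε > 0`) sum to zero. -/
theorem stmt5 (P Q : Polynomial ℂ) (hQ : Q ≠ 0)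
    (hdeg : P.degree + 2 ≤ Q.degree) (res : ℂ → ℂ)
    (hres : ∀ p ∈ Q.roots.toFinset, ∀ᶠ ε in 𝓝[>] (0 : ℝ),
      (∮ z in C(p, ε), P.eval z / Q.eval z) = 2 * Real.pi * Complex.I * res p) :
    ∑ p ∈ Q.roots.toFinset, res p = 0 := by
  have hQs := IsAlgClosed.splits Q
  have hlt : P.degree < Q.degree := by
    rcases eq_or_ne P 0 with rfl | hP0
    · exact bot_lt_iff_ne_bot.2 (degree_ne_bot.2 hQ)
    rw [degree_eq_natDegree hP0, degree_eq_natDegree hQ] at hdeg ⊢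
    norm_cast at hdeg ⊢
    omega
  obtain ⟨r, hr, hP⟩ := hQs.exists_eq_sum_mul_prod_X_sub_C_pow hlt
  have hres_eq : ∀ p ∈ Q.roots.toFinset, res p = (r p).coeff (Q.rootMultiplicity p - 1) := by
    intro p hp
    have hm : Q.rootMultiplicity p ≠ 0 :=
      ((rootMultiplicity_pos hQ).2 (isRoot_of_mem_roots (Multiset.mem_toFinset.1 hp))).ne'
    obtain ⟨ε, hε_res, hε_coeff⟩ := ((hres p hp).and
      (eventually_circleIntegral_eq_of_eq_sum_eval_div_sub_pow
        (fun z hz => hQs.eval_div_eval_eq_sum hP hz) hp (hr p hp) hm)).exists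
    simpa [two_pi_I_ne_zero] using hε_res.symm.trans hε_coeff
  rw [Finset.sum_congr rfl hres_eq]
  exact hQs.sum_coeff_rootMultiplicity_sub_one_eq_zero hQ hr hP hdeg
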